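/- Fix H ≥ 1, ρ > 0, θ ∈ (0,1), δ ∈ (0,1), and set C_ρ = √(1+ρ). Let P° ∈ Δ(S), let X₁, …, X_N be i.i.d. samples from P°, and let P̂° be the empirical distribution. Let 𝒫 = {P ∈ Δ(S) : D_χ(P, P°) ≤ ρ} and 𝒫̂ = {P ∈ Δ(S) : D_χ(P, P̂°) ≤ ρ}. Then for any fixed V : S → ℝ with 0 ≤ V(s) ≤ H for all s, with probability at least 1 − δ: |L_𝒫 V − L_𝒫̂ V| ≤ 2θ + ( √2 · C_ρ² H / ((C_ρ − 1)√N) ) · ( √(log( 2(1 + C_ρ H/(θ(C_ρ − 1)))/δ )) + 1 ). -/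

import Mathlib

set_option linter.unusedSectionVars false
set_option linter.unusedVariables false
set_option maxHeartbeats 2000000


/-- The probability simplex over a finite set `S`. -/
def isSimplex {S : Type*} [Fintype S] (P : S → ℝ) : Prop :=
  (∀ s, 0 ≤ P s) ∧ ∑ s, P s = 1

/-- Robust support operator `L_𝒫 V = inf {PV : P ∈ 𝒫}`. -/
noncomputable def Lrob {S : Type*} [Fintype S] (U : Set (S → ℝ)) (V : S → ℝ) : ℝ :=
  sInf {x | ∃ P ∈ U, x = ∑ s, P s * V s}

/-- Chi-square divergence (absolute continuity imposed separately, matching the `+∞`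
convention). -/
noncomputable def Dchi {S : Type*} [Fintype S] (P Q : S → ℝ) : ℝ :=
  ∑ s, (P s - Q s)^2 / Q s

/-- Empirical distribution of the samples `x 0, …, x (N-1)`. -/
noncomputable def empDist {S : Type*} [Fintype S] [DecidableEq S] {N : ℕ}
    (x : Fin N → S) : S → ℝ :=
  fun s' => ((Finset.univ.filter fun i => x i = s').card : ℝ) / N

namespace Stmt11
open Finset

variable {S : Type*} [Fintype S] [DecidableEq S] {N : ℕ}

open Finset

variable {S : Type*} [Fintype S] [DecidableEq S]

noncomputable def ga (V : S → ℝ) (α : ℝ) : S → ℝ := fun s => max (α - V s) 0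

noncomputable def n2 (Q g : S → ℝ) : ℝ := Real.sqrt (∑ s, Q s * g s ^ 2)

def Pset (Q : S → ℝ) (ρ : ℝ) : Set (S → ℝ) :=
  {P | isSimplex P ∧ (∀ s, Q s = 0 → P s = 0) ∧ Dchi P Q ≤ ρ}

lemma ga_nonneg (V : S → ℝ) (α : ℝ) (s : S) : 0 ≤ ga V α s := le_max_right _ _

lemma ga_ge (V : S → ℝ) (α : ℝ) (s : S) : α - V s ≤ ga V α s := le_max_left _ _

lemma ga_le {V : S → ℝ} {α : ℝ} (hα : 0 ≤ α) (hV : ∀ s, 0 ≤ V s) (s : S) :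
    ga V α s ≤ α := max_le (by linarith [hV s]) hα

lemma ga_mono {V : S → ℝ} {α β : ℝ} (h : α ≤ β) (s : S) : ga V α s ≤ ga V β s :=
  max_le_max (by linarith) le_rfl

lemma n2_nonneg (Q g : S → ℝ) : 0 ≤ n2 Q g := Real.sqrt_nonneg _

lemma sum_sq_nonneg {Q : S → ℝ} (hQ : ∀ s, 0 ≤ Q s) (g : S → ℝ) :
    0 ≤ ∑ s, Q s * g s ^ 2 :=
  Finset.sum_nonneg fun s _ => mul_nonneg (hQ s) (sq_nonneg _)

lemma sq_n2 {Q : S → ℝ} (hQ : ∀ s, 0 ≤ Q s) (g : S → ℝ) :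
    (n2 Q g) ^ 2 = ∑ s, Q s * g s ^ 2 :=
  Real.sq_sqrt (sum_sq_nonneg hQ g)

lemma n2_mono {Q g g' : S → ℝ} (hQ : ∀ s, 0 ≤ Q s) (hg : ∀ s, 0 ≤ g s)
    (h : ∀ s, g s ≤ g' s) : n2 Q g ≤ n2 Q g' := by
  apply Real.sqrt_le_sqrt
  apply Finset.sum_le_sum
  intro s _
  exact mul_le_mul_of_nonneg_left (pow_le_pow_left₀ (hg s) (h s) 2) (hQ s)

lemma n2_le {Q g : S → ℝ} (hQ : isSimplex Q) (hg : ∀ s, 0 ≤ g s) {t : ℝ}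
    (ht : 0 ≤ t) (h : ∀ s, Q s ≠ 0 → g s ≤ t) : n2 Q g ≤ t := by
  have : ∑ s, Q s * g s ^ 2 ≤ t ^ 2 := by
    calc ∑ s, Q s * g s ^ 2 ≤ ∑ s, Q s * t ^ 2 := by
          apply Finset.sum_le_sum
          intro s _
          by_cases hs : Q s = 0
          · simp [hs]
          · exact mul_le_mul_of_nonneg_left (pow_le_pow_left₀ (hg s) (h s hs) 2) (hQ.1 s)
      _ = t ^ 2 := by rw [← Finset.sum_mul, hQ.2, one_mul]
  calc n2 Q g ≤ Real.sqrt (t^2) := Real.sqrt_le_sqrt this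
    _ = t := by rw [Real.sqrt_sq ht]

lemma Lrob_bddBelow {Q V : S → ℝ} (ρ : ℝ) (hV : ∀ s, 0 ≤ V s) :
    BddBelow {x | ∃ P ∈ Pset Q ρ, x = ∑ s, P s * V s} := by
  refine ⟨0, ?_⟩
  rintro x ⟨P, hP, rfl⟩
  exact Finset.sum_nonneg fun s _ => mul_nonneg (hP.1.1 s) (hV s)

lemma Q_mem_Pset {Q : S → ℝ} {ρ : ℝ} (hQ : isSimplex Q) (hρ : 0 ≤ ρ) :
    Q ∈ Pset Q ρ := by
  refine ⟨hQ, fun s h => h, ?_⟩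
  simp [Dchi, hρ]

lemma Lrob_le {Q V P : S → ℝ} {ρ : ℝ} (hV : ∀ s, 0 ≤ V s) (hP : P ∈ Pset Q ρ) :
    Lrob (Pset Q ρ) V ≤ ∑ s, P s * V s :=
  csInf_le (Lrob_bddBelow ρ hV) ⟨P, hP, rfl⟩

theorem weak_duality {Q V : S → ℝ} {ρ C α : ℝ} (hQ : isSimplex Q)
    (hC : 0 ≤ C) (hC2 : 1 + ρ ≤ C^2) (hρ : 0 ≤ ρ) (hV : ∀ s, 0 ≤ V s) :
    α - C * n2 Q (ga V α) ≤ Lrob (Pset Q ρ) V := by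
  apply le_csInf
  · exact ⟨∑ s, Q s * V s, Q, Q_mem_Pset hQ hρ, rfl⟩
  rintro b ⟨P, ⟨⟨hP0, hP1⟩, hac, hchi⟩, rfl⟩
  set g := ga V α with hg
  -- Cauchy-Schwarz
  have CS := Finset.sum_mul_sq_le_sq_mul_sq Finset.univ
    (fun s => P s / Real.sqrt (Q s)) (fun s => Real.sqrt (Q s) * g s)
  have h1 : ∀ s, (P s / Real.sqrt (Q s)) * (Real.sqrt (Q s) * g s) = P s * g s := by
    intro s
    by_cases hs : Q s = 0
    · simp [hs, hac s hs]
    · have : Real.sqrt (Q s) ≠ 0 := by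
        simp [Real.sqrt_ne_zero' ]
        exact lt_of_le_of_ne (hQ.1 s) (Ne.symm hs)
      field_simp
  have h2 : ∀ s, (P s / Real.sqrt (Q s))^2 = (P s - Q s)^2 / Q s + (2 * P s - Q s) := by
    intro s
    by_cases hs : Q s = 0
    · simp [hs, hac s hs]
    · rw [div_pow, Real.sq_sqrt (hQ.1 s)]
      field_simp
      ring
  have h3 : ∀ s, (Real.sqrt (Q s) * g s)^2 = Q s * g s ^ 2 := by
    intro s
    rw [mul_pow, Real.sq_sqrt (hQ.1 s)]
  have e1 : ∑ s, (P s / Real.sqrt (Q s))^2 = Dchi P Q + 1 := by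
    simp only [h2]
    rw [Finset.sum_add_distrib]
    have : ∑ s, (2 * P s - Q s) = 1 := by
      rw [Finset.sum_sub_distrib, ← Finset.mul_sum, hP1, hQ.2]; ring
    rw [this, Dchi]
  have key : ∑ s, P s * g s ≤ C * n2 Q g := by
    have hPg : 0 ≤ ∑ s, P s * g s :=
      Finset.sum_nonneg fun s _ => mul_nonneg (hP0 s) (ga_nonneg V α s)
    have hsum : (∑ s, P s * g s)^2 ≤ (C * n2 Q g)^2 := by
      have : (∑ s, P s * g s)^2 ≤ (Dchi P Q + 1) * ∑ s, Q s * g s ^ 2 := by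
        calc (∑ s, P s * g s)^2 = (∑ s, (P s / Real.sqrt (Q s)) * (Real.sqrt (Q s) * g s))^2 := by
              simp only [h1]
          _ ≤ (∑ s, (P s / Real.sqrt (Q s))^2) * ∑ s, (Real.sqrt (Q s) * g s)^2 := CS
          _ = (Dchi P Q + 1) * ∑ s, Q s * g s ^ 2 := by rw [e1]; simp only [h3]
      calc (∑ s, P s * g s)^2 ≤ (Dchi P Q + 1) * ∑ s, Q s * g s ^ 2 := this
        _ ≤ C^2 * ∑ s, Q s * g s ^ 2 := by
            apply mul_le_mul_of_nonneg_right _ (sum_sq_nonneg hQ.1 g)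
            linarith
        _ = (C * n2 Q g)^2 := by rw [mul_pow, sq_n2 hQ.1]
    calc ∑ s, P s * g s = Real.sqrt ((∑ s, P s * g s)^2) := (Real.sqrt_sq hPg).symm
      _ ≤ Real.sqrt ((C * n2 Q g)^2) := Real.sqrt_le_sqrt hsum
      _ = C * n2 Q g := Real.sqrt_sq (mul_nonneg hC (n2_nonneg Q g))
  have : α - ∑ s, P s * g s ≤ ∑ s, P s * V s := by
    have : ∑ s, P s * (α - g s) ≤ ∑ s, P s * V s := by
      apply Finset.sum_le_sum
      intro s _
      apply mul_le_mul_of_nonneg_left _ (hP0 s)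
      have := ga_ge V α s
      linarith
    calc α - ∑ s, P s * g s = ∑ s, P s * (α - g s) := by
          simp only [mul_sub, Finset.sum_sub_distrib, ← Finset.sum_mul, hP1, one_mul]
      _ ≤ _ := this
  linarith

/-- Properties of the tilted distribution `P_α`. -/
lemma Pa_spec {Q V : S → ℝ} {α : ℝ} (hQ : isSimplex Q)
    (hE : 0 < ∑ s, Q s * ga V α s) :
    (fun s => Q s * ga V α s / (∑ s, Q s * ga V α s)) ∈
        Pset Q ((∑ s, Q s * (ga V α s)^2) / (∑ s, Q s * ga V α s)^2 - 1) ∧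
      ∑ s, (Q s * ga V α s / (∑ s, Q s * ga V α s)) * V s
        = α - (∑ s, Q s * (ga V α s)^2) / (∑ s, Q s * ga V α s) := by
  set E := ∑ s, Q s * ga V α s with hEdef
  have hE' : E ≠ 0 := ne_of_gt hE
  constructor
  · refine ⟨⟨?_, ?_⟩, ?_, ?_⟩
    · intro s
      exact div_nonneg (mul_nonneg (hQ.1 s) (ga_nonneg V α s)) hE.le
    · rw [← Finset.sum_div, div_self hE']
    · intro s hs; simp [hs]
    · -- Dchi computation
      apply le_of_eq
      rw [Dchi]
      have : ∀ s, (Q s * ga V α s / E - Q s)^2 / Q s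
          = Q s * (ga V α s)^2 / E^2 - 2 * (Q s * ga V α s) / E + Q s := by
        intro s
        by_cases hs : Q s = 0
        · simp [hs]
        · field_simp
          ring
      simp only [this]
      rw [Finset.sum_add_distrib, Finset.sum_sub_distrib, ← Finset.sum_div, ← Finset.sum_div,
        ← Finset.mul_sum, hQ.2]
      rw [← hEdef]
      field_simp
      ring
  · have : ∀ s, (Q s * ga V α s / E) * V s = (Q s * ga V α s * α - Q s * (ga V α s)^2) / E := by
      intro s
      rcases le_or_gt (α - V s) 0 with h | h
      · have : ga V α s = 0 := max_eq_right h
        simp [this]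
      · have hga : ga V α s = α - V s := max_eq_left h.le
        rw [hga]; field_simp; ring
    simp only [this]
    rw [← Finset.sum_div, Finset.sum_sub_distrib, ← Finset.sum_mul]
    field_simp
    ring

theorem strong_duality {Q V : S → ℝ} {ρ C H θ' : ℝ} (hQ : isSimplex Q)
    (hC : 1 < C) (hC2 : C^2 = 1 + ρ) (hH : 1 ≤ H)
    (hV : ∀ s, V s ∈ Set.Icc (0:ℝ) H) (hθ' : 0 < θ') :
    ∃ α, 0 ≤ α ∧ α ≤ C^2*H/(C^2-1) ∧
      Lrob (Pset Q ρ) V ≤ α - C * n2 Q (ga V α) + θ' := by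
  have hC0 : (0:ℝ) < C := by linarith
  have hC21 : 1 < C^2 := by nlinarith
  have hH0 : (0:ℝ) < H := by linarith
  set α₀ : ℝ := C^2*H/(C^2-1) with hα₀def
  have hα₀H : H < α₀ := by
    rw [hα₀def, lt_div_iff₀ (by linarith)]
    nlinarith
  -- minimum of V on the support of Q
  obtain ⟨s₀, hs₀⟩ : ∃ s, Q s ≠ 0 := by
    by_contra h
    push_neg at h
    have := hQ.2
    simp [h] at this
  have hTne : (Finset.univ.filter (fun s => Q s ≠ 0)).Nonempty :=
    ⟨s₀, by simp [hs₀]⟩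
  obtain ⟨sv, hsv, hsvmin⟩ := Finset.exists_min_image _ V hTne
  set v := V sv with hvdef
  have hv0 : 0 ≤ v := (hV sv).1
  have hvH : v ≤ H := (hV sv).2
  have hQsv : Q sv ≠ 0 := (Finset.mem_filter.mp hsv).2
  have hQsv' : 0 < Q sv := lt_of_le_of_ne (hQ.1 sv) (Ne.symm hQsv)
  have hvα₀ : v < α₀ := lt_of_le_of_lt hvH hα₀H
  -- expectation functions
  set Eg : ℝ → ℝ := fun α => ∑ s, Q s * ga V α s with hEgdef
  set Eg2 : ℝ → ℝ := fun α => ∑ s, Q s * (ga V α s)^2 with hEg2def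
  set f : ℝ → ℝ := fun α => Eg2 α - C^2 * (Eg α)^2 with hfdef
  have hgacont : ∀ s : S, Continuous (fun α => ga V α s) := by
    intro s
    exact (continuous_id.sub continuous_const).max continuous_const
  have hfcont : Continuous f := by
    apply Continuous.sub
    · apply continuous_finset_sum
      intro s _
      exact continuous_const.mul ((hgacont s).pow 2)
    · exact continuous_const.mul ((continuous_finset_sum _ fun s _ => continuous_const.mul (hgacont s)).pow 2)
  -- Eg is positive beyond v
  have hEgpos : ∀ α, v < α → 0 < Eg α := by
    intro α hα
    have h1 : 0 < Q sv * ga V α sv := by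
      apply mul_pos hQsv'
      have : 0 < α - V sv := by rw [← hvdef]; linarith
      exact lt_of_lt_of_le this (le_max_left _ _)
    calc (0:ℝ) < Q sv * ga V α sv := h1
      _ ≤ Eg α := Finset.single_le_sum
          (fun s _ => mul_nonneg (hQ.1 s) (ga_nonneg V α s)) (Finset.mem_univ sv)
  -- f α₀ ≤ 0
  have hEglb : ∀ α, α - H ≤ Eg α := by
    intro α
    have h1 : ∑ s, Q s * (α - V s) ≤ Eg α :=
      Finset.sum_le_sum fun s _ => mul_le_mul_of_nonneg_left (le_max_left _ _) (hQ.1 s)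
    have e : ∑ s, Q s * (α - V s) = α - ∑ s, Q s * V s := by
      simp only [mul_sub, Finset.sum_sub_distrib, ← Finset.sum_mul, hQ.2, one_mul]
    have hVH : ∑ s, Q s * V s ≤ H := by
      calc ∑ s, Q s * V s ≤ ∑ s, Q s * H :=
            Finset.sum_le_sum fun s _ => mul_le_mul_of_nonneg_left (hV s).2 (hQ.1 s)
        _ = H := by rw [← Finset.sum_mul, hQ.2, one_mul]
    rw [e] at h1
    linarith
  have hga_le : ∀ α : ℝ, 0 ≤ α → ∀ s, ga V α s ≤ α := by
    intro α hα s
    exact max_le (by linarith [(hV s).1]) hα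
  have hEg2_le : ∀ α : ℝ, 0 ≤ α → Eg2 α ≤ α * Eg α := by
    intro α hα
    rw [show α * Eg α = ∑ s, Q s * (α * ga V α s) from by
      rw [hEgdef, Finset.mul_sum]; apply Finset.sum_congr rfl; intro s _; ring]
    apply Finset.sum_le_sum
    intro s _
    apply mul_le_mul_of_nonneg_left _ (hQ.1 s)
    rw [sq]
    exact mul_le_mul_of_nonneg_right (hga_le α hα s) (ga_nonneg V α s)
  have hα₀0 : 0 < α₀ := by linarith
  have hC2ne : C^2 - 1 ≠ 0 := by nlinarith
  have hα₀e : (C^2 - 1) * α₀ = C^2 * H := by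
    rw [hα₀def]; field_simp [hC2ne]
  have hfα₀ : f α₀ ≤ 0 := by
    have hEg0 : 0 < Eg α₀ := lt_of_lt_of_le (by linarith) (hEglb α₀)
    have h1 : Eg2 α₀ ≤ α₀ * Eg α₀ := hEg2_le α₀ hα₀0.le
    have h2 : α₀ - H ≤ Eg α₀ := hEglb α₀
    have h3 : α₀ - C^2 * Eg α₀ ≤ 0 := by nlinarith
    have : f α₀ ≤ Eg α₀ * (α₀ - C^2 * Eg α₀) := by
      rw [hfdef]; simp only []; nlinarith
    nlinarith
  have hV0 : ∀ s, 0 ≤ V s := fun s => (hV s).1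
  have hEg2nonneg : ∀ α, 0 ≤ Eg2 α :=
    fun α => Finset.sum_nonneg fun s _ => mul_nonneg (hQ.1 s) (sq_nonneg _)
  by_cases hA : ∃ α₁, v < α₁ ∧ α₁ ≤ α₀ ∧ 0 ≤ f α₁
  · obtain ⟨α₁, hα₁v, hα₁α₀, hfα₁⟩ := hA
    obtain ⟨αs, hαsmem, hfαs⟩ :=
      intermediate_value_Icc' hα₁α₀ hfcont.continuousOn ⟨hfα₀, hfα₁⟩
    have hαsv : v < αs := lt_of_lt_of_le hα₁v hαsmem.1
    have hEpos := hEgpos αs hαsv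
    obtain ⟨hmem, hval⟩ := Pa_spec hQ hEpos
    have hEg2eq : Eg2 αs = C^2 * (Eg αs)^2 := by
      have := hfαs
      rw [hfdef] at this
      simp only [] at this
      linarith
    have hchieq : Eg2 αs / (Eg αs)^2 - 1 = ρ := by
      rw [hEg2eq]
      field_simp
      nlinarith [hC2]
    rw [hchieq] at hmem
    have hL := Lrob_le (Q := Q) (ρ := ρ) hV0 hmem
    rw [hval] at hL
    refine ⟨αs, by linarith, hαsmem.2, ?_⟩
    have hn2 : n2 Q (ga V αs) = C * Eg αs := by
      have : n2 Q (ga V αs) = Real.sqrt (Eg2 αs) := rfl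
      rw [this, hEg2eq, show C^2 * (Eg αs)^2 = (C * Eg αs)^2 from by ring,
        Real.sqrt_sq (by positivity)]
    rw [hn2]
    have : Eg2 αs / Eg αs = C^2 * Eg αs := by
      rw [hEg2eq]; field_simp
    rw [this] at hL
    nlinarith [hEpos]
  · push_neg at hA
    set t := min (θ'/C^2) (α₀ - v) with htdef
    have ht : 0 < t := lt_min (by positivity) (by linarith)
    set α := v + t with hαdef
    have hαv : v < α := by linarith
    have hαα₀ : α ≤ α₀ := by
      have := min_le_right (θ'/C^2) (α₀ - v)
      rw [hαdef]; rw [htdef]; linarith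
    have hfα : f α < 0 := hA α hαv hαα₀
    have hE := hEgpos α hαv
    obtain ⟨hmem, hval⟩ := Pa_spec hQ hE
    have hchi : Eg2 α/(Eg α)^2 - 1 ≤ ρ := by
      have h1 : Eg2 α < C^2*(Eg α)^2 := by
        have := hfα; rw [hfdef] at this; simp only [] at this; linarith
      have h2 : Eg2 α/(Eg α)^2 < C^2 := by
        rw [div_lt_iff₀ (by positivity)]; linarith
      nlinarith [hC2]
    have hmem' : (fun s => Q s * ga V α s / Eg α) ∈ Pset Q ρ :=
      ⟨hmem.1, hmem.2.1, le_trans hmem.2.2 hchi⟩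
    have hL := Lrob_le (Q := Q) (ρ := ρ) hV0 hmem'
    rw [hval] at hL
    have hLα : Lrob (Pset Q ρ) V ≤ α := by
      have : 0 ≤ Eg2 α / Eg α := div_nonneg (hEg2nonneg α) hE.le
      linarith
    have hEg2t : Eg2 α ≤ t^2 := by
      calc Eg2 α ≤ ∑ s, Q s * t^2 := by
            apply Finset.sum_le_sum
            intro s _
            by_cases hs : Q s = 0
            · simp [hs]
            · apply mul_le_mul_of_nonneg_left _ (hQ.1 s)
              have hVs : v ≤ V s := hsvmin s (by simp [hs])
              have : ga V α s ≤ t := by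
                apply max_le _ ht.le
                rw [hαdef]; linarith
              exact pow_le_pow_left₀ (ga_nonneg V α s) this 2
        _ = t^2 := by rw [← Finset.sum_mul, hQ.2, one_mul]
    have hn2 : n2 Q (ga V α) ≤ t := by
      have : n2 Q (ga V α) = Real.sqrt (Eg2 α) := rfl
      rw [this]
      calc Real.sqrt (Eg2 α) ≤ Real.sqrt (t^2) := Real.sqrt_le_sqrt hEg2t
        _ = t := Real.sqrt_sq ht.le
    refine ⟨α, by linarith, hαα₀, ?_⟩
    have hCt : C * t ≤ θ' := by
      have h1 : t ≤ θ'/C^2 := min_le_left _ _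
      have : C * t ≤ C * (θ'/C^2) := mul_le_mul_of_nonneg_left h1 hC0.le
      have h2 : C * (θ'/C^2) = θ'/C := by field_simp
      have h3 : θ'/C ≤ θ' := by
        rw [div_le_iff₀ hC0]; nlinarith
      linarith
    have : C * n2 Q (ga V α) ≤ θ' := le_trans (mul_le_mul_of_nonneg_left hn2 hC0.le) hCt
    linarith

lemma sum_prod_pow (f : S → ℝ) :
    ∑ x : Fin N → S, ∏ i, f (x i) = (∑ s, f s) ^ N := by
  calc ∑ x : Fin N → S, ∏ i, f (x i)
      = ∑ x ∈ Fintype.piFinset (fun _ : Fin N => (Finset.univ : Finset S)),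
          ∏ i, f (x i) := by rw [Fintype.piFinset_univ]
    _ = ∏ _i : Fin N, ∑ s, f s := (Finset.prod_univ_sum _ _).symm
    _ = (∑ s, f s) ^ N := by
        rw [Finset.prod_const, Finset.card_univ, Fintype.card_fin]

lemma chernoff (Po : S → ℝ) (hPo : ∀ s, 0 ≤ Po s) (Z : S → ℝ) (a : ℝ)
    (A : Finset (Fin N → S)) (hA : ∀ x ∈ A, a ≤ ∑ i, Z (x i)) :
    ∑ x ∈ A, ∏ i, Po (x i) ≤ Real.exp (-a) * (∑ s, Po s * Real.exp (Z s)) ^ N := by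
  have hprodnn : ∀ x : Fin N → S, 0 ≤ ∏ i, Po (x i) :=
    fun x => Finset.prod_nonneg fun i _ => hPo (x i)
  have h1 : ∑ x ∈ A, ∏ i, Po (x i)
      ≤ ∑ x ∈ A, (∏ i, Po (x i)) * Real.exp (∑ i, Z (x i) - a) := by
    apply Finset.sum_le_sum
    intro x hx
    nth_rewrite 1 [← mul_one (∏ i, Po (x i))]
    apply mul_le_mul_of_nonneg_left _ (hprodnn x)
    rw [Real.one_le_exp_iff]
    linarith [hA x hx]
  have h2 : ∑ x ∈ A, (∏ i, Po (x i)) * Real.exp (∑ i, Z (x i) - a)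
      ≤ ∑ x : Fin N → S, (∏ i, Po (x i)) * Real.exp (∑ i, Z (x i) - a) := by
    apply Finset.sum_le_sum_of_subset_of_nonneg (Finset.subset_univ A)
    intro x _ _
    exact mul_nonneg (hprodnn x) (Real.exp_pos _).le
  have h3 : ∀ x : Fin N → S, (∏ i, Po (x i)) * Real.exp (∑ i, Z (x i) - a)
      = Real.exp (-a) * ∏ i, (Po (x i) * Real.exp (Z (x i))) := by
    intro x
    rw [Real.exp_sub, Real.exp_sum, Finset.prod_mul_distrib, Real.exp_neg]
    field_simp
  calc ∑ x ∈ A, ∏ i, Po (x i)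
      ≤ ∑ x : Fin N → S, (∏ i, Po (x i)) * Real.exp (∑ i, Z (x i) - a) := le_trans h1 h2
    _ = Real.exp (-a) * ∑ x : Fin N → S, ∏ i, (Po (x i) * Real.exp (Z (x i))) := by
        rw [Finset.mul_sum]
        exact Finset.sum_congr rfl fun x _ => h3 x
    _ = Real.exp (-a) * (∑ s, Po s * Real.exp (Z s)) ^ N := by
        rw [sum_prod_pow (fun s => Po s * Real.exp (Z s))]

lemma mgf_bound (Po : S → ℝ) (hPo : isSimplex Po) (Y : S → ℝ) {c : ℝ} (hc : 0 < c)
    (hY : ∀ s, Y s ∈ Set.Icc 0 c) (r : ℝ) :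
    ∑ s, Po s * Real.exp (r / c * Y s)
      ≤ Real.exp ((∑ s, Po s * Y s) / c * (Real.exp r - 1)) := by
  have key : ∀ s, Real.exp (r / c * Y s) ≤ 1 + Y s / c * (Real.exp r - 1) := by
    intro s
    have ht0 : 0 ≤ Y s / c := div_nonneg (hY s).1 hc.le
    have ht1 : Y s / c ≤ 1 := (div_le_one hc).2 (hY s).2
    have hcx := convexOn_exp.2 (Set.mem_univ (0:ℝ)) (Set.mem_univ r)
      (show (0:ℝ) ≤ 1 - Y s / c by linarith) ht0 (show (1 - Y s / c) + Y s / c = 1 by ring)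
    simp only [smul_eq_mul, mul_zero, zero_add, Real.exp_zero, mul_one] at hcx
    calc Real.exp (r / c * Y s) = Real.exp (Y s / c * r) := by
          rw [show r / c * Y s = Y s / c * r from by ring]
      _ ≤ (1 - Y s / c) + Y s / c * Real.exp r := hcx
      _ = 1 + Y s / c * (Real.exp r - 1) := by ring
  calc ∑ s, Po s * Real.exp (r / c * Y s)
      ≤ ∑ s, Po s * (1 + Y s / c * (Real.exp r - 1)) :=
        Finset.sum_le_sum fun s _ => mul_le_mul_of_nonneg_left (key s) (hPo.1 s)
    _ = 1 + (∑ s, Po s * Y s) / c * (Real.exp r - 1) := by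
        have e : ∀ s, Po s * (1 + Y s / c * (Real.exp r - 1))
            = Po s + Po s * Y s * ((Real.exp r - 1) / c) := by intro s; ring
        simp only [e, Finset.sum_add_distrib, hPo.2, ← Finset.sum_mul]
        ring
    _ ≤ Real.exp ((∑ s, Po s * Y s) / c * (Real.exp r - 1)) := by
        rw [add_comm]
        exact Real.add_one_le_exp _

lemma exp_quad_upper {μ : ℝ} (h0 : 0 ≤ μ) (h1 : μ ≤ 1) :
    Real.exp μ ≤ 1 + μ + μ ^ 2 := by
  have h := Real.exp_bound (x := μ) (by rwa [abs_of_nonneg h0]) (n := 2) (by norm_num)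
  rw [abs_of_nonneg h0] at h
  have h2 : ∑ m ∈ Finset.range 2, μ ^ m / (m.factorial : ℝ) = 1 + μ := by
    simp [Finset.sum_range_succ]
  rw [h2] at h
  have h3 := (abs_le.mp h).2
  norm_num at h3
  nlinarith [sq_nonneg μ]

lemma exp_neg_quad {x : ℝ} (h0 : 0 ≤ x) : Real.exp (-x) ≤ 1 - x + x ^ 2 / 2 := by
  have hderiv : ∀ t : ℝ, HasDerivAt (fun t : ℝ => 1 - t + t ^ 2 / 2 - Real.exp (-t))
      (t - 1 + Real.exp (-t)) t := by
    intro t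
    have h1 : HasDerivAt (fun t : ℝ => Real.exp (-t)) (-Real.exp (-t)) t := by
      simpa using (hasDerivAt_neg t).exp
    have h2 : HasDerivAt (fun t : ℝ => 1 - t + t ^ 2 / 2) (-1 + (2 * t) / 2) t := by
      exact ((hasDerivAt_id t).const_sub 1).add
        (((hasDerivAt_pow 2 t).div_const 2).congr_deriv (by norm_num))
    have := h2.sub h1
    exact this.congr_deriv (by ring)
  have hmono : MonotoneOn (fun t : ℝ => 1 - t + t ^ 2 / 2 - Real.exp (-t)) (Set.Ici 0) := by
    apply monotoneOn_of_deriv_nonneg (convex_Ici 0)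
    · exact Continuous.continuousOn (by continuity)
    · intro t ht
      exact ((hderiv t).differentiableAt).differentiableWithinAt
    · intro t ht
      rw [(hderiv t).deriv]
      have := Real.one_sub_le_exp_neg t
      have ht' : 0 < t := by simpa using ht
      linarith
  have := hmono (Set.self_mem_Ici) (h0 : x ∈ Set.Ici 0) h0
  simp only [Real.exp_zero] at this
  norm_num at this
  linarith

lemma upper_tail (Po : S → ℝ) (hPo : isSimplex Po) (Y : S → ℝ) {c L : ℝ}
    (hc : 0 < c) (hY : ∀ s, Y s ∈ Set.Icc 0 c) (hL : 0 < L) (hN : 0 < N) :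
    ∑ x ∈ Finset.univ.filter (fun x : Fin N → S =>
        (N:ℝ) * ((∑ s, Po s * Y s)
          + (2*Real.sqrt ((∑ s, Po s * Y s)*c*L/N) + 2*c*L/N)) ≤ ∑ i, Y (x i)),
      ∏ i, Po (x i) ≤ Real.exp (-L) := by
  set m := ∑ s, Po s * Y s with hmdef
  set t₀ : ℝ := 2*Real.sqrt (m*c*L/N) + 2*c*L/N with ht₀def
  have hm0 : 0 ≤ m := Finset.sum_nonneg fun s _ => mul_nonneg (hPo.1 s) (hY s).1
  have hN0 : (0:ℝ) < N := by exact_mod_cast hN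
  have hsq0 : (0:ℝ) ≤ Real.sqrt (m*c*L/N) := Real.sqrt_nonneg _
  have hclN : (0:ℝ) < 2*c*L/N := by positivity
  have ht₀0 : 0 < t₀ := by rw [ht₀def]; linarith
  have ht₀sq : 4*(m*c*L/N) ≤ t₀^2 := by
    have h2 : (2*Real.sqrt (m*c*L/N))^2 = 4*(m*c*L/N) := by
      rw [mul_pow, Real.sq_sqrt (by positivity)]; ring
    nlinarith
  have hNt₀ : 2*c*L ≤ (N:ℝ)*t₀ := by
    have h9 : 2*c*L/N ≤ t₀ := by rw [ht₀def]; linarith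
    rw [div_le_iff₀ hN0] at h9
    linarith
  have main : ∀ μ : ℝ, 0 < μ →
      (N:ℝ) * (m * (Real.exp μ - 1)) - μ * ((N:ℝ)*(m + t₀)) ≤ -L * c →
      ∑ x ∈ Finset.univ.filter (fun x : Fin N → S =>
        (N:ℝ) * (m + t₀) ≤ ∑ i, Y (x i)), ∏ i, Po (x i) ≤ Real.exp (-L) := by
    intro μ hμ0 hexpo
    have hchern := chernoff Po hPo.1 (fun s => μ/c * Y s) (μ/c * ((N:ℝ)*(m + t₀)))
      (Finset.univ.filter (fun x : Fin N → S => (N:ℝ) * (m + t₀) ≤ ∑ i, Y (x i)))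
      (by
        intro x hx
        rw [Finset.mem_filter] at hx
        rw [← Finset.mul_sum]
        exact mul_le_mul_of_nonneg_left hx.2 (by positivity))
    apply le_trans hchern
    have hmgf := mgf_bound Po hPo Y hc hY μ
    have hbase : (0:ℝ) ≤ ∑ s, Po s * Real.exp (μ/c * Y s) :=
      Finset.sum_nonneg fun s _ => mul_nonneg (hPo.1 s) (Real.exp_pos _).le
    calc Real.exp (-(μ/c * ((N:ℝ)*(m + t₀)))) * (∑ s, Po s * Real.exp (μ/c * Y s)) ^ N
        ≤ Real.exp (-(μ/c * ((N:ℝ)*(m + t₀)))) * (Real.exp (m/c * (Real.exp μ - 1))) ^ N := by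
          apply mul_le_mul_of_nonneg_left _ (Real.exp_pos _).le
          exact pow_le_pow_left₀ hbase hmgf N
      _ = Real.exp ((N:ℝ) * (m/c * (Real.exp μ - 1)) - μ/c * ((N:ℝ)*(m + t₀))) := by
          rw [← Real.exp_nat_mul, ← Real.exp_add]
          congr 1
          ring
      _ ≤ Real.exp (-L) := by
          apply Real.exp_le_exp.2
          rw [show (N:ℝ) * (m/c * (Real.exp μ - 1)) - μ/c * ((N:ℝ)*(m + t₀))
              = ((N:ℝ) * (m * (Real.exp μ - 1)) - μ * ((N:ℝ)*(m + t₀))) / c from by ring]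
          rw [div_le_iff₀ hc]
          calc (N:ℝ) * (m * (Real.exp μ - 1)) - μ * ((N:ℝ)*(m + t₀)) ≤ -L * c := hexpo
            _ = -L * c := rfl
  rcases le_or_gt t₀ (2*m) with hcase | hcase
  · -- small deviation: μ = t₀ / (2m)
    have hm : 0 < m := by nlinarith
    have hμ0 : 0 < t₀ / (2*m) := by positivity
    set μ : ℝ := t₀ / (2*m) with hμdef
    have hμ1 : μ ≤ 1 := by rw [hμdef, div_le_one (by linarith)]; linarith
    have hmμ : 2*m*μ = t₀ := by rw [hμdef]; field_simp
    clear_value μ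
    apply main μ hμ0
    have hexp : Real.exp μ ≤ 1 + μ + μ^2 := exp_quad_upper hμ0.le hμ1
    have hkey : (N:ℝ) * (m * (Real.exp μ - 1)) - μ * ((N:ℝ)*(m + t₀))
        ≤ (N:ℝ) * (m * μ^2 - μ * t₀) := by
      nlinarith [mul_le_mul_of_nonneg_left hexp (mul_nonneg hN0.le hm0)]
    have hval : (N:ℝ) * (m * μ^2 - μ * t₀) = -((N:ℝ)*μ*t₀)/2 := by
      linear_combination ((N:ℝ)*μ/2) * hmμ
    have h5 : (N:ℝ)*μ*t₀*(2*m) = (N:ℝ)*t₀^2 := by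
      linear_combination ((N:ℝ)*t₀)*hmμ
    have h6 : 4*(m*c*L) ≤ (N:ℝ)*t₀^2 := by
      have h7 := mul_le_mul_of_nonneg_left ht₀sq hN0.le
      have h8 : (N:ℝ)*(4*(m*c*L/N)) = 4*(m*c*L) := by field_simp
      rw [h8] at h7; linarith
    have hfin : -((N:ℝ)*μ*t₀)/2 ≤ -L * c := by nlinarith [h5, h6, hm, hL, hc]
    exact le_trans hkey (le_trans (le_of_eq hval) hfin)
  · -- large deviation: μ = 1
    apply main 1 one_pos
    have hexp : Real.exp 1 ≤ 3 := by
      have := Real.exp_one_lt_d9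
      linarith
    nlinarith [mul_nonneg hN0.le hm0]

lemma lower_tail (Po : S → ℝ) (hPo : isSimplex Po) (Y : S → ℝ) {c L : ℝ}
    (hc : 0 < c) (hY : ∀ s, Y s ∈ Set.Icc 0 c) (hL : 0 < L) (hN : 0 < N)
    (hm : 0 < ∑ s, Po s * Y s) :
    ∑ x ∈ Finset.univ.filter (fun x : Fin N → S =>
        ∑ i, Y (x i) ≤ (N:ℝ) * ((∑ s, Po s * Y s)
          - Real.sqrt (2*(∑ s, Po s * Y s)*c*L/N))),
      ∏ i, Po (x i) ≤ Real.exp (-L) := by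
  set m := ∑ s, Po s * Y s with hmdef
  set t₁ : ℝ := Real.sqrt (2*m*c*L/N) with ht₁def
  have hN0 : (0:ℝ) < N := by exact_mod_cast hN
  have ht₁0 : 0 < t₁ := Real.sqrt_pos.2 (by positivity)
  have ht₁sq : t₁^2 = 2*m*c*L/N := Real.sq_sqrt (by positivity)
  have hμ0 : 0 < t₁/m := by positivity
  set μ : ℝ := t₁/m with hμdef
  have hmμ : m*μ = t₁ := by rw [hμdef]; field_simp
  clear_value μ
  have hchern := chernoff Po hPo.1 (fun s => (-μ)/c * Y s) ((-μ)/c * ((N:ℝ)*(m - t₁)))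
    (Finset.univ.filter (fun x : Fin N → S =>
        ∑ i, Y (x i) ≤ (N:ℝ) * (m - t₁)))
    (by
      intro x hx
      rw [Finset.mem_filter] at hx
      rw [← Finset.mul_sum]
      rw [show (-μ)/c * ((N:ℝ)*(m - t₁)) = -(μ/c * ((N:ℝ)*(m - t₁))) from by ring,
        show (-μ)/c * (∑ i, Y (x i)) = -(μ/c * (∑ i, Y (x i))) from by ring]
      exact neg_le_neg (mul_le_mul_of_nonneg_left hx.2 (by positivity)))
  apply le_trans hchern
  have hmgf := mgf_bound Po hPo Y hc hY (-μ)
  have hbase : (0:ℝ) ≤ ∑ s, Po s * Real.exp ((-μ)/c * Y s) :=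
    Finset.sum_nonneg fun s _ => mul_nonneg (hPo.1 s) (Real.exp_pos _).le
  calc Real.exp (-((-μ)/c * ((N:ℝ)*(m - t₁)))) * (∑ s, Po s * Real.exp ((-μ)/c * Y s)) ^ N
      ≤ Real.exp (-((-μ)/c * ((N:ℝ)*(m - t₁)))) * (Real.exp (m/c * (Real.exp (-μ) - 1))) ^ N := by
        apply mul_le_mul_of_nonneg_left _ (Real.exp_pos _).le
        exact pow_le_pow_left₀ hbase hmgf N
    _ = Real.exp ((N:ℝ) * (m/c * (Real.exp (-μ) - 1)) - (-μ)/c * ((N:ℝ)*(m - t₁))) := by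
        rw [← Real.exp_nat_mul, ← Real.exp_add]
        congr 1
        ring
    _ ≤ Real.exp (-L) := by
        apply Real.exp_le_exp.2
        rw [show (N:ℝ) * (m/c * (Real.exp (-μ) - 1)) - (-μ)/c * ((N:ℝ)*(m - t₁))
            = ((N:ℝ) * (m * (Real.exp (-μ) - 1)) + μ * ((N:ℝ)*(m - t₁))) / c from by ring]
        rw [div_le_iff₀ hc]
        have hexp : Real.exp (-μ) ≤ 1 - μ + μ^2/2 := exp_neg_quad hμ0.le
        have hkey : (N:ℝ) * (m * (Real.exp (-μ) - 1)) + μ * ((N:ℝ)*(m - t₁))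
            ≤ (N:ℝ) * (m * μ^2/2 - μ * t₁) := by
          nlinarith [mul_le_mul_of_nonneg_left hexp (mul_nonneg hN0.le hm.le)]
        have hval : (N:ℝ) * (m * μ^2/2 - μ * t₁) = -((N:ℝ)*μ*t₁)/2 := by
          linear_combination ((N:ℝ)*μ/2) * hmμ
        have h5 : (N:ℝ)*μ*t₁*m = (N:ℝ)*t₁^2 := by
          linear_combination ((N:ℝ)*t₁)*hmμ
        have h6 : (N:ℝ)*t₁^2 = 2*(m*c*L) := by
          rw [ht₁sq]; field_simp
        have hfin : -((N:ℝ)*μ*t₁)/2 ≤ -L * c := by nlinarith [h5, h6, hm, hL, hc]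
        exact le_trans hkey (le_trans (le_of_eq hval) hfin)


lemma empDist_expect (hN : 0 < N) (x : Fin N → S) (h : S → ℝ) :
    ∑ s, empDist x s * h s = (∑ i, h (x i)) / N := by
  have key : ∑ s, ((Finset.univ.filter fun i => x i = s).card : ℝ) * h s
      = ∑ i, h (x i) := by
    rw [← Finset.sum_fiberwise_of_maps_to (g := x) (fun i _ => Finset.mem_univ (x i))
      (fun i => h (x i))]
    apply Finset.sum_congr rfl
    intro s _
    have he : ∀ i ∈ Finset.univ.filter (fun i => x i = s), h (x i) = h s :=
      fun i hi => by rw [(Finset.mem_filter.mp hi).2]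
    rw [Finset.sum_congr rfl he, Finset.sum_const, nsmul_eq_mul]
  rw [← key, Finset.sum_div]
  apply Finset.sum_congr rfl
  intro s _
  rw [empDist]
  ring

lemma empDist_simplex (hN : 0 < N) (x : Fin N → S) : isSimplex (empDist x) := by
  have hN0 : (0:ℝ) < N := by exact_mod_cast hN
  constructor
  · intro s
    apply div_nonneg _ hN0.le
    positivity
  · have h1 := empDist_expect hN x (fun _ => 1)
    simp only [mul_one] at h1
    rw [h1, Finset.sum_const, Finset.card_univ, Fintype.card_fin, nsmul_eq_mul, mul_one]
    field_simp

/-- Concentration of the empirical `L²` norm at a fixed function `g`. -/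
lemma point_conc (Po : S → ℝ) (hPo : isSimplex Po) (g : S → ℝ) {B L : ℝ}
    (hB : 0 < B) (hg : ∀ s, 0 ≤ g s ∧ g s ≤ B) (hL : 0 < L) (hN : 0 < N) :
    ∑ x ∈ Finset.univ.filter (fun x : Fin N → S =>
        ¬ |n2 (empDist x) g - n2 Po g| ≤ Real.sqrt (2*B^2*L/N)),
      ∏ i, Po (x i) ≤ 2 * Real.exp (-L) := by
  classical
  have hN0 : (0:ℝ) < N := by exact_mod_cast hN
  set c : ℝ := B^2 with hcdef
  have hc : 0 < c := by positivity
  set Y : S → ℝ := fun s => g s ^ 2 with hYdef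
  have hY : ∀ s, Y s ∈ Set.Icc 0 c :=
    fun s => ⟨sq_nonneg _, pow_le_pow_left₀ (hg s).1 (hg s).2 2⟩
  set m : ℝ := ∑ s, Po s * Y s with hmdef
  have hm0 : 0 ≤ m := Finset.sum_nonneg fun s _ => mul_nonneg (hPo.1 s) (hY s).1
  set u : ℝ := Real.sqrt (2*c*L/N) with hudef
  have hu : 0 < u := Real.sqrt_pos.2 (by positivity)
  have husq : u^2 = 2*c*L/N := Real.sq_sqrt (by positivity)
  have hn2Po : n2 Po g = Real.sqrt m := rfl
  have hemp : ∀ x : Fin N → S, n2 (empDist x) g = Real.sqrt ((∑ i, Y (x i)) / N) := by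
    intro x
    rw [n2, empDist_expect hN x Y]
  have hYnn : ∀ x : Fin N → S, (0:ℝ) ≤ ∑ i, Y (x i) :=
    fun x => Finset.sum_nonneg fun i _ => (hY (x i)).1
  have hprodnn : ∀ x : Fin N → S, 0 ≤ ∏ i, Po (x i) :=
    fun x => Finset.prod_nonneg fun i _ => hPo.1 (x i)
  set Aup : Finset (Fin N → S) := Finset.univ.filter (fun x : Fin N → S =>
      (N:ℝ) * (m + (2*Real.sqrt (m*c*L/N) + 2*c*L/N)) ≤ ∑ i, Y (x i)) with hAupdef
  set Alo : Finset (Fin N → S) := Finset.univ.filter (fun x : Fin N → S =>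
      ∑ i, Y (x i) ≤ (N:ℝ) * (m - Real.sqrt (2*m*c*L/N))) with hAlodef
  -- arithmetic facts relating the thresholds to `u`
  have hsqrtmu : Real.sqrt (m*c*L/N) = Real.sqrt m * Real.sqrt (c*L/N) := by
    rw [← Real.sqrt_mul hm0]
    congr 1
    ring
  have hcLu : Real.sqrt (c*L/N) ≤ u := by
    apply Real.sqrt_le_sqrt
    rw [show 2*c*L/(N:ℝ) = c*L/N + c*L/N from by ring]
    have h2 : (0:ℝ) ≤ c*L/N := by positivity
    linarith
  have ht₀u : 2*Real.sqrt (m*c*L/N) + 2*c*L/N ≤ 2*Real.sqrt m*u + u^2 := by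
    rw [hsqrtmu, husq]
    have := mul_le_mul_of_nonneg_left hcLu (Real.sqrt_nonneg m)
    nlinarith [Real.sqrt_nonneg m]
  have ht₁u : Real.sqrt (2*m*c*L/N) = Real.sqrt m * u := by
    rw [hudef, ← Real.sqrt_mul hm0]
    congr 1
    ring
  -- inclusion of the bad event into the two tail events
  have hsub : ∀ x : Fin N → S, ¬ |n2 (empDist x) g - n2 Po g| ≤ u →
      ((N:ℝ) * (m + (2*Real.sqrt (m*c*L/N) + 2*c*L/N)) ≤ ∑ i, Y (x i)) ∨
      (0 < m ∧ ∑ i, Y (x i) ≤ (N:ℝ) * (m - Real.sqrt (2*m*c*L/N))) := by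
    intro x hx
    rw [hemp x, hn2Po, not_le] at hx
    set T : ℝ := ∑ i, Y (x i) with hTdef
    have hT0 : 0 ≤ T := hYnn x
    rcases lt_abs.mp hx with h | h
    · left
      have h1 : Real.sqrt m + u < Real.sqrt (T/N) := by linarith
      have h2 : (Real.sqrt m + u)^2 < T/N :=
        (Real.lt_sqrt (by positivity)).mp h1
      have hsm : (Real.sqrt m)^2 = m := Real.sq_sqrt hm0
      have h3 : m + (2*Real.sqrt (m*c*L/N) + 2*c*L/N) ≤ (Real.sqrt m + u)^2 := by
        nlinarith [ht₀u]
      have h4 : m + (2*Real.sqrt (m*c*L/N) + 2*c*L/N) < T/N := lt_of_le_of_lt h3 h2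
      rw [lt_div_iff₀ hN0] at h4
      linarith
    · right
      have h1 : Real.sqrt (T/N) < Real.sqrt m - u := by linarith
      have hum : u < Real.sqrt m := by
        have := Real.sqrt_nonneg (T/N)
        linarith
      have hmpos : 0 < m := Real.sqrt_pos.mp (lt_trans hu hum)
      refine ⟨hmpos, ?_⟩
      have h2 : T/N < (Real.sqrt m - u)^2 :=
        (Real.sqrt_lt' (by linarith)).mp h1
      have hsm : (Real.sqrt m)^2 = m := Real.sq_sqrt hm0
      have h3 : (Real.sqrt m - u)^2 ≤ m - Real.sqrt (2*m*c*L/N) := by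
        rw [ht₁u]
        nlinarith [hum.le, hu.le]
      have h4 : T/N < m - Real.sqrt (2*m*c*L/N) := lt_of_lt_of_le h2 h3
      rw [div_lt_iff₀ hN0] at h4
      linarith
  have hup : ∑ x ∈ Aup, ∏ i, Po (x i) ≤ Real.exp (-L) :=
    upper_tail Po hPo Y hc hY hL hN
  by_cases hm : 0 < m
  · have hlo : ∑ x ∈ Alo, ∏ i, Po (x i) ≤ Real.exp (-L) :=
      lower_tail Po hPo Y hc hY hL hN hm
    have hsubset : Finset.univ.filter (fun x : Fin N → S =>
        ¬ |n2 (empDist x) g - n2 Po g| ≤ u) ⊆ Aup ∪ Alo := by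
      intro x hxx
      rw [Finset.mem_filter] at hxx
      rcases hsub x hxx.2 with h | h
      · exact Finset.mem_union_left _ (Finset.mem_filter.mpr ⟨Finset.mem_univ x, h⟩)
      · exact Finset.mem_union_right _ (Finset.mem_filter.mpr ⟨Finset.mem_univ x, h.2⟩)
    have hU : ∑ x ∈ Aup ∪ Alo, ∏ i, Po (x i)
        ≤ (∑ x ∈ Aup, ∏ i, Po (x i)) + ∑ x ∈ Alo, ∏ i, Po (x i) := by
      have h1 := Finset.sum_union_inter (s₁ := Aup) (s₂ := Alo) (f := fun x => ∏ i, Po (x i))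
      have h2 : 0 ≤ ∑ x ∈ Aup ∩ Alo, ∏ i, Po (x i) :=
        Finset.sum_nonneg fun x _ => hprodnn x
      linarith
    calc ∑ x ∈ Finset.univ.filter (fun x : Fin N → S =>
          ¬ |n2 (empDist x) g - n2 Po g| ≤ u), ∏ i, Po (x i)
        ≤ ∑ x ∈ Aup ∪ Alo, ∏ i, Po (x i) :=
          Finset.sum_le_sum_of_subset_of_nonneg hsubset (fun x _ _ => hprodnn x)
      _ ≤ (∑ x ∈ Aup, ∏ i, Po (x i)) + ∑ x ∈ Alo, ∏ i, Po (x i) := hU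
      _ ≤ Real.exp (-L) + Real.exp (-L) := add_le_add hup hlo
      _ = 2 * Real.exp (-L) := by ring
  · have hsubset : Finset.univ.filter (fun x : Fin N → S =>
        ¬ |n2 (empDist x) g - n2 Po g| ≤ u) ⊆ Aup := by
      intro x hxx
      rw [Finset.mem_filter] at hxx
      rcases hsub x hxx.2 with h | h
      · exact Finset.mem_filter.mpr ⟨Finset.mem_univ x, h⟩
      · exact absurd h.1 hm
    calc ∑ x ∈ Finset.univ.filter (fun x : Fin N → S =>
          ¬ |n2 (empDist x) g - n2 Po g| ≤ u), ∏ i, Po (x i)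
        ≤ ∑ x ∈ Aup, ∏ i, Po (x i) :=
          Finset.sum_le_sum_of_subset_of_nonneg hsubset (fun x _ _ => hprodnn x)
      _ ≤ Real.exp (-L) := hup
      _ ≤ 2 * Real.exp (-L) := by linarith [Real.exp_pos (-L)]

lemma sum_union_le {α : Type*} [DecidableEq α] {A B : Finset α} {w : α → ℝ}
    (hw : ∀ x, 0 ≤ w x) :
    ∑ x ∈ A ∪ B, w x ≤ ∑ x ∈ A, w x + ∑ x ∈ B, w x := by
  have h1 := Finset.sum_union_inter (s₁ := A) (s₂ := B) (f := w)
  have h2 : 0 ≤ ∑ x ∈ A ∩ B, w x := Finset.sum_nonneg fun x _ => hw x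
  linarith

lemma sum_biUnion_le {α : Type*} [DecidableEq α] (t : ℕ → Finset α) (s : Finset ℕ)
    (w : α → ℝ) (hw : ∀ x, 0 ≤ w x) :
    ∑ x ∈ s.biUnion t, w x ≤ ∑ j ∈ s, ∑ x ∈ t j, w x := by
  induction s using Finset.induction_on with
  | empty => simp
  | insert a s' ha ih =>
    rw [Finset.biUnion_insert, Finset.sum_insert ha]
    calc ∑ x ∈ t a ∪ s'.biUnion t, w x
        ≤ ∑ x ∈ t a, w x + ∑ x ∈ s'.biUnion t, w x := sum_union_le hw
      _ ≤ ∑ x ∈ t a, w x + ∑ j ∈ s', ∑ x ∈ t j, w x := by linarith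

/-- One direction of the deterministic comparison on the good event. -/
theorem combo_dir {Q Q' V : S → ℝ} {ρ C H θ u : ℝ} {M₀ : ℕ}
    (hQ : isSimplex Q) (hQ' : isSimplex Q')
    (hC : 1 < C) (hC2 : C^2 = 1 + ρ) (hH : 1 ≤ H) (hθ : 0 < θ)
    (hV : ∀ s, V s ∈ Set.Icc (0:ℝ) H) (hu : 0 ≤ u)
    (hM₀ : C^2*H/(C^2-1)/θ < (M₀:ℝ) + 1)
    (hgrid : ∀ j : ℕ, j ≤ M₀ →
      |n2 Q' (ga V ((j:ℝ)*θ)) - n2 Q (ga V ((j:ℝ)*θ))| ≤ u) :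
    Lrob (Pset Q ρ) V - Lrob (Pset Q' ρ) V ≤ 2*θ + C*u := by
  have hC0 : (0:ℝ) < C := by linarith
  have hρ0 : 0 < ρ := by nlinarith
  have hV0 : ∀ s, 0 ≤ V s := fun s => (hV s).1
  obtain ⟨α, hα0, hαle, hL⟩ := strong_duality hQ hC hC2 hH hV hθ
  set j := Nat.floor (α/θ) with hjdef
  have hαθ0 : 0 ≤ α/θ := div_nonneg hα0 hθ.le
  have hjα : (j:ℝ)*θ ≤ α := by
    have h1 := Nat.floor_le hαθ0
    calc (j:ℝ)*θ ≤ (α/θ)*θ := mul_le_mul_of_nonneg_right h1 hθ.le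
      _ = α := by field_simp
  have hαj : α < ((j:ℝ)+1)*θ := by
    have h1 := Nat.lt_floor_add_one (α/θ)
    calc α = (α/θ)*θ := by field_simp
      _ < ((j:ℝ)+1)*θ := by
          apply mul_lt_mul_of_pos_right _ hθ
          exact_mod_cast h1
  have hjM : j ≤ M₀ := by
    have h1 : α/θ ≤ (C^2*H/(C^2-1))/θ := (div_le_div_iff_of_pos_right hθ).mpr hαle
    have h2 : α/θ < (M₀:ℝ) + 1 := lt_of_le_of_lt h1 hM₀
    have h3 : j < M₀ + 1 := by
      rw [hjdef]
      rw [Nat.floor_lt hαθ0]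
      push_cast
      exact h2
    omega
  have hweak := weak_duality (Q := Q') (V := V) (ρ := ρ) (C := C) (α := (j:ℝ)*θ)
    hQ' hC0.le (le_of_eq hC2.symm) hρ0.le hV0
  have hmono : n2 Q (ga V ((j:ℝ)*θ)) ≤ n2 Q (ga V α) :=
    n2_mono hQ.1 (ga_nonneg V _) (fun s => ga_mono hjα s)
  have hg2 := (abs_le.mp (hgrid j hjM)).2
  have h3 : C * n2 Q (ga V ((j:ℝ)*θ)) ≤ C * n2 Q (ga V α) :=
    mul_le_mul_of_nonneg_left hmono hC0.le
  have h4 : C * n2 Q' (ga V ((j:ℝ)*θ)) - C*u ≤ C * n2 Q (ga V ((j:ℝ)*θ)) := by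
    nlinarith
  linarith

end Stmt11


open Stmt11

open Classical in
theorem stmt11 {S : Type*} [Fintype S] [Nonempty S] [DecidableEq S]
    (H ρ θ δ : ℝ) (N : ℕ)
    (hH : 1 ≤ H) (hρ : 0 < ρ) (hθ : θ ∈ Set.Ioo (0:ℝ) 1)
    (hδ : δ ∈ Set.Ioo (0:ℝ) 1) (hN : 0 < N)
    (Po : S → ℝ) (hPo : isSimplex Po)
    (V : S → ℝ) (hV : ∀ s, V s ∈ Set.Icc (0:ℝ) H) :
    1 - δ ≤ ∑ x : Fin N → S,
      (if |Lrob {P | isSimplex P ∧ (∀ s, Po s = 0 → P s = 0) ∧ Dchi P Po ≤ ρ} V -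
            Lrob {P | isSimplex P ∧ (∀ s, empDist x s = 0 → P s = 0) ∧
              Dchi P (empDist x) ≤ ρ} V| ≤
          2 * θ + Real.sqrt 2 * Real.sqrt (1 + ρ)^2 * H /
              ((Real.sqrt (1 + ρ) - 1) * Real.sqrt N) *
            (Real.sqrt (Real.log
                (2 * (1 + Real.sqrt (1 + ρ) * H / (θ * (Real.sqrt (1 + ρ) - 1))) / δ))
              + 1)
        then ∏ i, Po (x i) else 0) := by
  classical
  obtain ⟨hθ0, hθ1⟩ := hθ
  obtain ⟨hδ0, hδ1⟩ := hδ
  have hN0 : (0:ℝ) < N := by exact_mod_cast hN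
  have hH0 : (0:ℝ) < H := by linarith
  set C : ℝ := Real.sqrt (1 + ρ) with hCdef
  have hC2 : C^2 = 1 + ρ := Real.sq_sqrt (by linarith)
  have hC1 : 1 < C := by nlinarith [Real.sqrt_nonneg (1+ρ)]
  have hC0 : (0:ℝ) < C := by linarith
  have hCm1 : 0 < C - 1 := by linarith
  set B : ℝ := C*H/(C-1) with hBdef
  have hB0 : 0 < B := div_pos (by nlinarith) hCm1
  set M₀ : ℕ := Nat.floor (B/θ) with hM₀def
  set Mr : ℝ := 1 + C * H / (θ * (C - 1)) with hMrdef
  have hMrpos : 0 < C * H / (θ * (C - 1)) := div_pos (by nlinarith) (by nlinarith)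
  have hMr1 : 1 ≤ Mr := by rw [hMrdef]; linarith
  have hMr0 : 0 < Mr := by linarith
  have hM₀Mr : (M₀:ℝ) + 1 ≤ Mr := by
    have h1 : (M₀:ℝ) ≤ B/θ := Nat.floor_le (div_nonneg hB0.le hθ0.le)
    have h2 : B/θ = C*H/(θ*(C-1)) := by
      rw [hBdef]
      rw [div_div]
      ring_nf
    rw [hMrdef]
    linarith
  set L : ℝ := Real.log (2*Mr/δ) with hLdef
  have hL0 : 0 < L := by
    rw [hLdef]
    apply Real.log_pos
    rw [lt_div_iff₀ hδ0]
    linarith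
  have hexpL : Real.exp (-L) = δ/(2*Mr) := by
    rw [hLdef, Real.exp_neg, Real.exp_log (div_pos (by linarith) hδ0), inv_div]
  set u : ℝ := Real.sqrt (2*B^2*L/N) with hudef
  have hu0 : 0 ≤ u := Real.sqrt_nonneg _
  have hsN : 0 < Real.sqrt N := Real.sqrt_pos.2 hN0
  have hueq : u = B * (Real.sqrt 2 * Real.sqrt L / Real.sqrt N) := by
    rw [hudef, show 2*B^2*L/(N:ℝ) = (B^2*(2*L))/N from by ring]
    rw [Real.sqrt_div (by positivity) (N:ℝ)]
    rw [Real.sqrt_mul (sq_nonneg B) (2*L), Real.sqrt_sq hB0.le]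
    rw [Real.sqrt_mul (by norm_num : (0:ℝ) ≤ 2) L]
    ring
  set conc : ℝ := Real.sqrt 2 * C^2 * H / ((C-1)*Real.sqrt N) * (Real.sqrt L + 1)
    with hconcdef
  have hCu : C*u ≤ conc := by
    have hfac : 0 ≤ Real.sqrt 2 * C^2 * H / ((C-1)*Real.sqrt N) :=
      div_nonneg (by positivity) (mul_pos hCm1 hsN).le
    have he : C*(B*(Real.sqrt 2*Real.sqrt L/Real.sqrt N))
        = Real.sqrt 2*C^2*H/((C-1)*Real.sqrt N)*Real.sqrt L := by
      rw [hBdef]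
      field_simp
    rw [hueq, he, hconcdef]
    nlinarith [Real.sqrt_nonneg L, hfac]
  set Bad : Finset (Fin N → S) := (Finset.range (M₀+1)).biUnion (fun j =>
    Finset.univ.filter (fun x : Fin N → S =>
      ¬ |n2 (empDist x) (ga V ((j:ℝ)*θ)) - n2 Po (ga V ((j:ℝ)*θ))| ≤ u)) with hBaddef
  have hprodnn : ∀ x : Fin N → S, 0 ≤ ∏ i, Po (x i) :=
    fun x => Finset.prod_nonneg fun i _ => hPo.1 (x i)
  have hBadsum : ∑ x ∈ Bad, ∏ i, Po (x i) ≤ δ := by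
    have h1 := sum_biUnion_le (fun j => Finset.univ.filter (fun x : Fin N → S =>
        ¬ |n2 (empDist x) (ga V ((j:ℝ)*θ)) - n2 Po (ga V ((j:ℝ)*θ))| ≤ u))
      (Finset.range (M₀+1)) (fun x => ∏ i, Po (x i)) hprodnn
    have h2 : ∀ j ∈ Finset.range (M₀+1),
        (∑ x ∈ Finset.univ.filter (fun x : Fin N → S =>
          ¬ |n2 (empDist x) (ga V ((j:ℝ)*θ)) - n2 Po (ga V ((j:ℝ)*θ))| ≤ u),
          ∏ i, Po (x i)) ≤ 2 * Real.exp (-L) := by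
      intro j hj
      have hjM : j ≤ M₀ := by
        rw [Finset.mem_range] at hj
        omega
      have hjθB : (j:ℝ)*θ ≤ B := by
        have hjle : (j:ℝ) ≤ (M₀:ℝ) := by exact_mod_cast hjM
        have hM₀B : (M₀:ℝ)*θ ≤ B := by
          have h3 := Nat.floor_le (div_nonneg hB0.le hθ0.le)
          calc (M₀:ℝ)*θ ≤ (B/θ)*θ := mul_le_mul_of_nonneg_right h3 hθ0.le
            _ = B := by field_simp
        calc (j:ℝ)*θ ≤ (M₀:ℝ)*θ := mul_le_mul_of_nonneg_right hjle hθ0.le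
          _ ≤ B := hM₀B
      have hgb : ∀ s, 0 ≤ ga V ((j:ℝ)*θ) s ∧ ga V ((j:ℝ)*θ) s ≤ B :=
        fun s => ⟨ga_nonneg V _ s,
          le_trans (ga_le (by positivity) (fun s => (hV s).1) s) hjθB⟩
      exact point_conc Po hPo _ hB0 hgb hL0 hN
    calc ∑ x ∈ Bad, ∏ i, Po (x i)
        ≤ ∑ j ∈ Finset.range (M₀+1), ∑ x ∈ Finset.univ.filter (fun x : Fin N → S =>
            ¬ |n2 (empDist x) (ga V ((j:ℝ)*θ)) - n2 Po (ga V ((j:ℝ)*θ))| ≤ u),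
            ∏ i, Po (x i) := h1
      _ ≤ ∑ _j ∈ Finset.range (M₀+1), 2*Real.exp (-L) := Finset.sum_le_sum h2
      _ = ((M₀:ℝ)+1) * (2*Real.exp (-L)) := by
          rw [Finset.sum_const, Finset.card_range, nsmul_eq_mul]
          push_cast
          ring
      _ ≤ Mr * (2*Real.exp (-L)) :=
          mul_le_mul_of_nonneg_right hM₀Mr (by positivity)
      _ = δ := by
          rw [hexpL]
          field_simp
  have hα₀B : C^2*H/(C^2-1) ≤ B := by
    rw [hBdef, div_le_div_iff₀ (by nlinarith) hCm1]
    nlinarith [mul_pos (mul_pos hC0 hH0) hCm1]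
  have hM₀' : C^2*H/(C^2-1)/θ < (M₀:ℝ)+1 := by
    have h1 : C^2*H/(C^2-1)/θ ≤ B/θ := (div_le_div_iff_of_pos_right hθ0).mpr hα₀B
    have h2 : B/θ < (M₀:ℝ)+1 := by
      have h3 := Nat.lt_floor_add_one (B/θ)
      exact_mod_cast h3
    linarith
  have hdet : ∀ x : Fin N → S, x ∉ Bad →
      |Lrob (Pset Po ρ) V - Lrob (Pset (empDist x) ρ) V| ≤ 2*θ + C*u := by
    intro x hx
    have hgrid : ∀ j : ℕ, j ≤ M₀ →
        |n2 (empDist x) (ga V ((j:ℝ)*θ)) - n2 Po (ga V ((j:ℝ)*θ))| ≤ u := by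
      intro j hj
      by_contra hcon
      exact hx (Finset.mem_biUnion.mpr ⟨j, Finset.mem_range.mpr (by omega),
        Finset.mem_filter.mpr ⟨Finset.mem_univ x, hcon⟩⟩)
    have hemps := empDist_simplex hN x
    have hd1 := combo_dir hPo hemps hC1 hC2 hH hθ0 hV hu0 hM₀' hgrid
    have hd2 := combo_dir hemps hPo hC1 hC2 hH hθ0 hV hu0 hM₀'
      (fun j hj => by rw [abs_sub_comm]; exact hgrid j hj)
    exact abs_sub_le_iff.mpr ⟨hd1, hd2⟩
  have hone : ∑ x : Fin N → S, ∏ i, Po (x i) = 1 := by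
    rw [sum_prod_pow Po, hPo.2, one_pow]
  have hfinal : ∀ (F : (Fin N → S) → ℝ),
      (∀ x, 0 ≤ F x) → (∀ x, x ∉ Bad → F x = ∏ i, Po (x i)) →
      1 - δ ≤ ∑ x : Fin N → S, F x := by
    intro F hF0 hFeq
    have h1 : ∑ x ∈ Finset.univ \ Bad, F x = ∑ x ∈ Finset.univ \ Bad, ∏ i, Po (x i) :=
      Finset.sum_congr rfl (fun x hx => hFeq x (Finset.mem_sdiff.mp hx).2)
    have h2 : ∑ x ∈ Finset.univ \ Bad, ∏ i, Po (x i)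
        = (∑ x : Fin N → S, ∏ i, Po (x i)) - ∑ x ∈ Bad, ∏ i, Po (x i) :=
      Finset.sum_sdiff_eq_sub (Finset.subset_univ Bad)
    have h3 : ∑ x ∈ Finset.univ \ Bad, F x ≤ ∑ x : Fin N → S, F x :=
      Finset.sum_le_sum_of_subset_of_nonneg (Finset.sdiff_subset) (fun x _ _ => hF0 x)
    rw [hone] at h2
    linarith [hBadsum]
  apply hfinal
  · intro x
    split_ifs with h
    · exact hprodnn x
    · exact le_refl 0
  · intro x hx
    rw [if_pos]
    calc |Lrob (Pset Po ρ) V - Lrob (Pset (empDist x) ρ) V| ≤ 2*θ + C*u := hdet x hx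
      _ ≤ 2*θ + conc := by linarith
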